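/- arXiv:2304.01338 — 2 statements merged into one kernel-verified Lean document; each statement's English description precedes it below -/
import Mathlib

section
/- Let K be a field and h₀,…,h_r ∈ K[[x₁,…,xₙ]] formal power series, not all zero. Then there exists a finite composite σ̄ of elementary monomial substitutions on K[[x₁,…,xₙ]], an exponent vector d ∈ ℕⁿ with associated monomial M = x₁^{d₁}⋯xₙ^{dₙ}, and power series h̃₀,…,h̃_r ∈ K[[x₁,…,xₙ]] such that σ̄(hᵢ) = M·h̃ᵢ for every 0 ≤ i ≤ r, and the constant coefficient of h̃_j is nonzero for at least one 0 ≤ j ≤ r. -/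
open scoped Classical in
/-- The `K`-linear substitution of monomials along an (injective) map `T` on exponents:
it sends the monomial `x^e` to `x^{T e}`. -/
noncomputable def exponentSubst {K : Type*} [CommRing K] {n : ℕ}
    (T : (Fin n →₀ ℕ) → (Fin n →₀ ℕ)) (F : MvPowerSeries (Fin n) K) :
    MvPowerSeries (Fin n) K :=
  fun d => if h : ∃ e, T e = d then MvPowerSeries.coeff h.choose F else 0

/-- An elementary monomial substitution on `K[[x₁,…,xₙ]]`: the endomorphism induced
either by a permutation of the variables, or (for `r` with 1-based index `1 < r ≤ n`,
i.e. `0 < (r : ℕ)` in 0-based indexing) by `xᵢ ↦ xᵢxᵣ` for `i < r` and `xᵢ ↦ xᵢ` for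
`i ≥ r`; on exponents the latter sends `e` to `e + (∑_{i<r} eᵢ)·δᵣ`. -/
def IsElemMonomialSubst {K : Type*} [CommRing K] {n : ℕ}
    (σ : MvPowerSeries (Fin n) K → MvPowerSeries (Fin n) K) : Prop :=
  (∃ e : Equiv.Perm (Fin n), σ = exponentSubst (Finsupp.equivMapDomain e)) ∨
  (∃ r : Fin n, 0 < (r : ℕ) ∧ σ = exponentSubst
    (fun a => a + Finsupp.single r (∑ i ∈ Finset.univ.filter (fun i => i < r), a i)))

/-!
On exponents every elementary substitution is an injective monotone map of `ℕⁿ`, and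
conjugating `x₁ ↦ x₁x₂` by a permutation gives `xᵢ ↦ xᵢxⱼ`, which adds the `i`-th exponent to
the `j`-th. A Euclidean algorithm on the two coordinates where exponent vectors `a, b` disagree
in opposite directions makes `a` and `b` comparable; monotonicity preserves comparabilities
already achieved, so any finite set can be turned into a chain. By Dickson's lemma the
exponents occurring in the `hᵢ` lie above finitely many minimal ones; once those form a chain
under `T`, the image `T a` of the least of them lies below every exponent of every `σ̄(hᵢ)`,
so `x^{T a}` divides each `σ̄(hᵢ)`, and for the `hⱼ` with `a` in its support the quotient has
constant coefficient `coeff a hⱼ ≠ 0`.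
-/

theorem Equiv.Perm.exists_apply_eq_and_apply_eq {α : Type*} [DecidableEq α]
    {i j i' j' : α} (hij : i ≠ j) (hij' : i' ≠ j') : ∃ e : Equiv.Perm α, e i = i' ∧ e j = j' := by
  set e₁ := Equiv.swap i i'
  have hj : e₁ j ≠ i' := fun h =>
    hij (e₁.injective (h.trans (Equiv.swap_apply_left i i').symm)).symm
  refine ⟨e₁.trans (Equiv.swap (e₁ j) j'), ?_, Equiv.swap_apply_left _ _⟩
  simp only [Equiv.trans_apply, e₁, Equiv.swap_apply_left]
  exact Equiv.swap_apply_of_ne_of_ne hj.symm hij'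

theorem MvPowerSeries.exists_eq_monomial_mul {σ R : Type*} [CommSemiring R]
    {F : MvPowerSeries σ R} {e : σ →₀ ℕ} (h : ∀ d, coeff d F ≠ 0 → e ≤ d) :
    ∃ G, F = monomial e 1 * G ∧ constantCoeff G = coeff e F := by
  let G : MvPowerSeries σ R := fun d => coeff (e + d) F
  refine ⟨G, ?_, congrArg (coeff · F) (add_zero e)⟩
  ext d
  rw [coeff_monomial_mul]
  split_ifs with hd
  · rw [one_mul]
    exact congrArg (coeff · F) (add_tsub_cancel_of_le hd).symm
  · exact not_not.1 (mt (h d) hd)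

namespace MonomialPrincipalization

open MvPowerSeries

variable {n : ℕ}

def elementaryExponentMaps (n : ℕ) : Set (Function.End (Fin n →₀ ℕ)) :=
  {T | (∃ e : Equiv.Perm (Fin n), T = Finsupp.equivMapDomain e) ∨
    (∃ r : Fin n, 0 < (r : ℕ) ∧ T = fun a =>
      a + Finsupp.single r (∑ i ∈ Finset.univ.filter (fun i => i < r), a i))}

def compositeExponentMaps (n : ℕ) : Submonoid (Function.End (Fin n →₀ ℕ)) :=
  Submonoid.closure (elementaryExponentMaps n)

theorem injective_monotone_of_mem_elementaryExponentMaps {T : Function.End (Fin n →₀ ℕ)}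
    (hT : T ∈ elementaryExponentMaps n) : Function.Injective T ∧ Monotone T := by
  rcases hT with ⟨e, rfl⟩ | ⟨r, -, rfl⟩
  · exact ⟨(Finsupp.equivCongrLeft e).injective, fun a b hab i => hab (e.symm i)⟩
  · set s : (Fin n →₀ ℕ) → ℕ := fun a => ∑ i ∈ Finset.univ.filter (fun i => i < r), a i
    -- `s` ignores coordinate `r`, so subtracting `single r (s b)` undoes the map
    have hs : ∀ a, s (a + Finsupp.single r (s a)) = s a := fun a =>
      Finset.sum_congr rfl fun i hi => by simp [(Finset.mem_filter.1 hi).2.ne']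
    refine ⟨Function.LeftInverse.injective (g := fun b => b - Finsupp.single r (s b))
      fun a => ?_, fun a b hab => ?_⟩
    · change a + Finsupp.single r (s a) - Finsupp.single r (s (a + Finsupp.single r (s a))) = a
      rw [hs, add_tsub_cancel_right]
    exact add_le_add hab (Finsupp.single_mono (Finset.sum_le_sum fun i _ => hab i))

theorem injective_monotone_of_mem_compositeExponentMaps {T : Function.End (Fin n →₀ ℕ)}
    (hT : T ∈ compositeExponentMaps n) : Function.Injective T ∧ Monotone T := by
  induction hT using Submonoid.closure_induction with
  | mem T hT => exact injective_monotone_of_mem_elementaryExponentMaps hT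
  | one => exact ⟨Function.injective_id, monotone_id⟩
  | mul f g _ _ hf hg => exact ⟨hf.1.comp hg.1, hf.2.comp hg.2⟩

/-- On monomials this is the substitution `xᵢ ↦ xᵢ xⱼ`. -/
noncomputable def addCoord (i j : Fin n) : Function.End (Fin n →₀ ℕ) :=
  fun a => a + Finsupp.single j (a i)

theorem addCoord_mem_compositeExponentMaps {i j : Fin n} (hij : i ≠ j) :
    addCoord i j ∈ compositeExponentMaps n := by
  have hn : 1 < n := by
    by_contra! hn
    exact hij (Fin.ext (by omega))
  set z₀ : Fin n := ⟨0, by omega⟩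
  set z₁ : Fin n := ⟨1, hn⟩
  obtain ⟨e, hi, hj⟩ := Equiv.Perm.exists_apply_eq_and_apply_eq hij (i' := z₀) (j' := z₁)
    (by simp [z₀, z₁, Fin.ext_iff])
  set shift : Function.End (Fin n →₀ ℕ) := fun a =>
    a + Finsupp.single z₁ (∑ i ∈ Finset.univ.filter (fun i => i < z₁), a i)
  have hfilter : Finset.univ.filter (fun m => m < z₁) = {z₀} := by
    ext m
    simp [z₀, z₁, Fin.ext_iff, Fin.lt_def]
  -- conjugating by `e` moves coordinates `i, j` to `0, 1`, where `shift` is `addCoord 0 1`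
  set π : Function.End (Fin n →₀ ℕ) := Finsupp.equivMapDomain e
  set π' : Function.End (Fin n →₀ ℕ) := Finsupp.equivMapDomain e.symm
  have hconj : addCoord i j = π' * shift * π := by
    funext a
    ext k
    change (a + Finsupp.single j (a i)) k =
      Finsupp.equivMapDomain e.symm (shift (Finsupp.equivMapDomain e a)) k
    simp only [shift, hfilter, Finset.sum_singleton, Finsupp.add_apply,
      Finsupp.equivMapDomain_apply, Equiv.symm_symm, Equiv.symm_apply_apply, Finsupp.single_apply]
    simp only [← hi, ← hj, e.symm_apply_apply, e.injective.eq_iff]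
  rw [hconj]
  refine mul_mem (mul_mem ?_ ?_) ?_ <;> apply Submonoid.subset_closure
  exacts [Or.inl ⟨e.symm, rfl⟩, Or.inr ⟨z₁, Nat.one_pos, rfl⟩, Or.inl ⟨e, rfl⟩]

def expDist (a b : Fin n →₀ ℕ) : ℕ := ∑ k, Nat.dist (a k) (b k)

theorem expDist_addCoord_lt {a b : Fin n →₀ ℕ} {i j : Fin n}
    (h : Nat.dist (a j + a i) (b j + b i) < Nat.dist (a j) (b j)) :
    expDist (addCoord i j a) (addCoord i j b) < expDist a b := by
  refine Finset.sum_lt_sum (fun k _ => ?_) ⟨j, Finset.mem_univ j, ?_⟩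
  · by_cases hk : j = k
    · subst hk
      simpa [addCoord] using h.le
    · simp [addCoord, hk]
  · simpa [addCoord] using h

theorem exists_mem_compositeExponentMaps_comparable (a b : Fin n →₀ ℕ) :
    ∃ T ∈ compositeExponentMaps n, T a ≤ T b ∨ T b ≤ T a := by
  induction hd : expDist a b using Nat.strong_induction_on generalizing a b with
  | _ d ih =>
  by_cases hab : a ≤ b ∨ b ≤ a
  · exact ⟨1, one_mem _, hab⟩
  simp only [not_or, Finsupp.le_def, not_forall, not_le] at hab
  obtain ⟨⟨j, hj⟩, ⟨i, hi⟩⟩ := hab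
  have hij : i ≠ j := by rintro rfl; omega
  -- one Euclidean step: add the coordinate on which the two vectors disagree less
  -- to the other one, which strictly decreases the distance
  obtain ⟨i', j', hij', hlt⟩ : ∃ i' j' : Fin n, i' ≠ j' ∧
      Nat.dist (a j' + a i') (b j' + b i') < Nat.dist (a j') (b j') := by
    by_cases hc : a j + a i ≤ b j + b i
    · exact ⟨j, i, hij.symm, by simp only [Nat.dist]; omega⟩
    · exact ⟨i, j, hij, by simp only [Nat.dist]; omega⟩
  obtain ⟨T, hT, hcmp⟩ := ih _ (hd ▸ expDist_addCoord_lt hlt) _ _ rfl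
  exact ⟨T * addCoord i' j', mul_mem hT (addCoord_mem_compositeExponentMaps hij'), hcmp⟩

theorem exists_mem_compositeExponentMaps_forall_comparable
    (P : Finset ((Fin n →₀ ℕ) × (Fin n →₀ ℕ))) :
    ∃ T ∈ compositeExponentMaps n, ∀ p ∈ P, T p.1 ≤ T p.2 ∨ T p.2 ≤ T p.1 := by
  induction P using Finset.induction_on with
  | empty => exact ⟨1, one_mem _, by simp⟩
  | insert p P _ ih =>
    obtain ⟨T, hT, hP⟩ := ih
    obtain ⟨T', hT', hp⟩ := exists_mem_compositeExponentMaps_comparable (T p.1) (T p.2)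
    have hmono := (injective_monotone_of_mem_compositeExponentMaps hT').2
    refine ⟨T' * T, mul_mem hT' hT, Finset.forall_mem_insert _ _ _ |>.2 ⟨hp, fun q hq => ?_⟩⟩
    exact (hP q hq).imp (fun h => hmono h) (fun h => hmono h)

theorem exists_mem_compositeExponentMaps_le {S : Set (Fin n →₀ ℕ)} (hS : S.Nonempty) :
    ∃ T ∈ compositeExponentMaps n, ∃ a ∈ S, ∀ x ∈ S, T a ≤ T x := by
  have hpwo := Set.isPWO_of_wellQuasiOrderedLE S
  -- Dickson's lemma: the minimal elements of `S` are finitely many and lie below all of `S`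
  set M := {x | Minimal (· ∈ S) x}
  have hM : M.Finite := (setOfPred_minimal_antichain _).finite_of_partiallyWellOrderedOn
    (hpwo.mono (setOfPred_minimal_subset _))
  obtain ⟨T, hT, hcmp⟩ :=
    exists_mem_compositeExponentMaps_forall_comparable (hM.toFinset ×ˢ hM.toFinset)
  obtain ⟨b, -, hb⟩ := hpwo.exists_le_minimal hS.some_mem
  obtain ⟨a, haM, ha⟩ := Set.IsPWO.exists_minimalFor T M (hM.image T).isPWO ⟨b, hb⟩
  refine ⟨T, hT, a, haM.1, fun x hx => ?_⟩
  obtain ⟨c, hcx, hcM : c ∈ M⟩ := hpwo.exists_le_minimal hx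
  have hac : T a ≤ T c := (hcmp (a, c) (by simp [haM, hcM])).elim id (ha hcM)
  exact hac.trans ((injective_monotone_of_mem_compositeExponentMaps hT).2 hcx)

section PowerSeries

variable {K : Type*} [CommRing K]

theorem coeff_exponentSubst_apply {T : (Fin n →₀ ℕ) → (Fin n →₀ ℕ)} (hT : Function.Injective T)
    (F : MvPowerSeries (Fin n) K) (e : Fin n →₀ ℕ) :
    coeff (T e) (exponentSubst T F) = coeff e F := by
  have h : ∃ e', T e' = T e := ⟨e, rfl⟩
  rw [coeff_apply, exponentSubst, dif_pos h, hT h.choose_spec]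

theorem coeff_exponentSubst_of_notMem_range {T : (Fin n →₀ ℕ) → (Fin n →₀ ℕ)} {d : Fin n →₀ ℕ}
    (hd : d ∉ Set.range T) (F : MvPowerSeries (Fin n) K) :
    coeff d (exponentSubst T F) = 0 := by
  rw [coeff_apply, exponentSubst]
  exact dif_neg hd

theorem exponentSubst_id : exponentSubst (K := K) (id : (Fin n →₀ ℕ) → (Fin n →₀ ℕ)) = id := by
  funext F
  ext d
  exact coeff_exponentSubst_apply Function.injective_id F d

theorem exponentSubst_comp {T₁ T₂ : (Fin n →₀ ℕ) → (Fin n →₀ ℕ)} (h₁ : Function.Injective T₁)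
    (h₂ : Function.Injective T₂) (F : MvPowerSeries (Fin n) K) :
    exponentSubst (T₁ ∘ T₂) F = exponentSubst T₁ (exponentSubst T₂ F) := by
  ext d
  by_cases hd : d ∈ Set.range T₁
  · obtain ⟨d, rfl⟩ := hd
    rw [coeff_exponentSubst_apply h₁]
    by_cases hd' : d ∈ Set.range T₂
    · obtain ⟨e, rfl⟩ := hd'
      rw [← Function.comp_apply (f := T₁), coeff_exponentSubst_apply (h₁.comp h₂),
        coeff_exponentSubst_apply h₂]
    · rw [coeff_exponentSubst_of_notMem_range hd', coeff_exponentSubst_of_notMem_range]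
      rintro ⟨e, he⟩
      exact hd' ⟨e, h₁ he⟩
  · rw [coeff_exponentSubst_of_notMem_range hd, coeff_exponentSubst_of_notMem_range]
    exact fun hd' => hd (Set.range_comp_subset_range T₂ T₁ hd')

theorem foldr_map_exponentSubst {L : List (Function.End (Fin n →₀ ℕ))}
    (hL : ∀ T ∈ L, T ∈ elementaryExponentMaps n) :
    (L.map fun T : Function.End _ => exponentSubst (K := K) T).foldr (· ∘ ·) id =
      exponentSubst L.prod := by
  induction L with
  | nil => exact exponentSubst_id.symm
  | cons T L ih =>
    have hT := injective_monotone_of_mem_elementaryExponentMaps (hL T List.mem_cons_self)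
    have hL' : ∀ T ∈ L, T ∈ elementaryExponentMaps n := fun T' hT' =>
      hL T' (List.mem_cons_of_mem _ hT')
    have hprod := injective_monotone_of_mem_compositeExponentMaps
      (Submonoid.list_prod_mem _ fun T' hT' => Submonoid.subset_closure (hL' T' hT'))
    funext F
    rw [List.map_cons, List.foldr_cons, ih hL', List.prod_cons]
    exact (exponentSubst_comp hT.1 hprod.1 F).symm

theorem isElemMonomialSubst_exponentSubst {T : Function.End (Fin n →₀ ℕ)}
    (hT : T ∈ elementaryExponentMaps n) : IsElemMonomialSubst (exponentSubst (K := K) T) :=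
  hT.imp (fun ⟨e, he⟩ => ⟨e, by rw [he]⟩) fun ⟨r, hr, he⟩ => ⟨r, hr, by rw [he]⟩

end PowerSeries

end MonomialPrincipalization

open MonomialPrincipalization

/-- Theorem 4 of the paper: monomial principalization for power series.
For power series `h₀, …, h_r ∈ K[[x₁,…,xₙ]]`, not all zero, there is a finite composite
`σ̄` of elementary monomial substitutions, an exponent vector `d ∈ ℕⁿ` with associated
monomial `M = x₁^{d₁}⋯xₙ^{dₙ}`, and power series `h̃₀, …, h̃_r` with `σ̄(hᵢ) = M·h̃ᵢ` for
all `i` and `h̃_j(0) ≠ 0` for some `j`. -/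
theorem monomial_principalization_powerSeries
    {K : Type*} [Field K] (n r : ℕ)
    (h : Fin (r + 1) → MvPowerSeries (Fin n) K) (hnz : ∃ i, h i ≠ 0) :
    ∃ (L : List (MvPowerSeries (Fin n) K → MvPowerSeries (Fin n) K))
      (d : Fin n → ℕ) (ht : Fin (r + 1) → MvPowerSeries (Fin n) K),
      (∀ σ ∈ L, IsElemMonomialSubst σ) ∧
      (∀ i, (L.foldr (· ∘ ·) id) (h i) = (∏ k, MvPowerSeries.X k ^ d k) * ht i) ∧
      (∃ j, MvPowerSeries.constantCoeff (ht j) ≠ 0) := by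
  set S := {d | ∃ i, MvPowerSeries.coeff d (h i) ≠ 0}
  have hS : S.Nonempty := by
    obtain ⟨i, hi⟩ := hnz
    obtain ⟨d, hd⟩ := MvPowerSeries.ne_zero_iff_exists_coeff_ne_zero _ |>.1 hi
    exact ⟨d, i, hd⟩
  obtain ⟨T, hT, a, ⟨j, hj⟩, hmin⟩ := exists_mem_compositeExponentMaps_le hS
  have hinj := (injective_monotone_of_mem_compositeExponentMaps hT).1
  have hdiv : ∀ i d, MvPowerSeries.coeff d (exponentSubst T (h i)) ≠ 0 → T a ≤ d := by
    intro i d hd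
    by_cases hdT : d ∈ Set.range T
    · obtain ⟨e, rfl⟩ := hdT
      exact hmin e ⟨i, by rwa [coeff_exponentSubst_apply hinj] at hd⟩
    · exact absurd (coeff_exponentSubst_of_notMem_range hdT _) hd
  choose ht hht hconst using fun i => MvPowerSeries.exists_eq_monomial_mul (hdiv i)
  obtain ⟨l, hl, rfl⟩ := Submonoid.exists_list_of_mem_closure hT
  refine ⟨l.map fun T : Function.End _ => exponentSubst T, l.prod a, ht, ?_, fun i => ?_, j, ?_⟩
  · intro σ hσ
    obtain ⟨T, hT, rfl⟩ := List.mem_map.1 hσ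
    exact isElemMonomialSubst_exponentSubst (hl T hT)
  · rw [foldr_map_exponentSubst hl, ← Finsupp.prod_fintype _ _ fun _ => pow_zero _,
      ← MvPowerSeries.monomial_one_eq]
    exact hht i
  · rwa [hconst, coeff_exponentSubst_apply hinj]
end

section
/- Let K be a field and f, g₁,…,g_r ∈ K[[x₁,…,xₙ]] formal power series. Then f belongs to the ideal (g₁,…,g_r) of K[[x₁,…,xₙ]] if and only if for every n-tuple of positive integers m = (m₁,…,mₙ), the element φ_m(f) belongs to the ideal of the subring K[[t^{m₁},…,t^{mₙ}]] ⊆ K[[t]] generated by φ_m(g₁),…,φ_m(g_r). -/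
open Finsupp in
/-- The substitution `φ_m : K[[x₁,…,xₙ]] → K[[t]]`, `xᵢ ↦ t^{mᵢ}` (for `m` with all
`mᵢ ≥ 1`): the coefficient of `t^k` is the sum of the coefficients of `F` over all
exponent vectors `e` with `∑ᵢ eᵢ mᵢ = k`. -/
noncomputable def monomialCurveSubst {K : Type*} [CommRing K] {n : ℕ} (m : Fin n → ℕ)
    (F : MvPowerSeries (Fin n) K) : PowerSeries K :=
  PowerSeries.mk fun k =>
    ∑ e ∈ (Finset.Iic (equivFunOnFinite.symm fun _ : Fin n => k)).filter
        (fun e : Fin n →₀ ℕ => ∑ i, e i * m i = k),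
      MvPowerSeries.coeff e F

/-!
`φ_m` is the substitution `xᵢ ↦ t^{mᵢ}`, hence a ring homomorphism whose image is exactly the
subring `K[[t^{m₁},…,t^{mₙ}]]`; this gives the forward direction. Conversely, for
`mᵢ = bⁿ + bⁱ` with `b > d`, an exponent of total degree `< d` is the only exponent of its weight.
Lifting the coefficients `cᵢ` along `φ_m` therefore produces `aᵢ` such that `f - ∑ aᵢ gᵢ` has no
terms of degree `< d`, i.e. lies in `𝔪^d` for the ideal `𝔪` of the variables. So
`f ∈ ⋂_d ((g) + 𝔪^d)`, which is `(g)` by Krull's intersection theorem.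
-/

open Finsupp

theorem Nat.sum_mul_pow_lt_pow {b n : ℕ} {c : Fin n → ℕ} (hc : ∀ i, c i < b) :
    ∑ i, c i * b ^ (i : ℕ) < b ^ n :=
  (finFunctionFinEquiv fun i => (⟨c i, hc i⟩ : Fin b)).isLt

theorem Nat.eq_of_sum_mul_pow_eq {b n : ℕ} {c c' : Fin n → ℕ} (hc : ∀ i, c i < b)
    (hc' : ∀ i, c' i < b) (h : ∑ i, c i * b ^ (i : ℕ) = ∑ i, c' i * b ^ (i : ℕ)) : c = c' := by
  have key : (fun i => (⟨c i, hc i⟩ : Fin b)) = fun i => ⟨c' i, hc' i⟩ :=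
    finFunctionFinEquiv.injective (Fin.ext h)
  exact funext fun i => congrArg Fin.val (congrFun key i)

theorem Finsupp.weight_eq_sum_mul {σ : Type*} [Fintype σ] (w : σ → ℕ) (e : σ →₀ ℕ) :
    weight w e = ∑ i, e i * w i := by
  simp [weight_eq_sum]

theorem AddSubmonoid.mem_closure_range_iff_exists_weight_eq {ι : Type*} {w : ι → ℕ} {k : ℕ} :
    k ∈ closure (Set.range w) ↔ ∃ e : ι →₀ ℕ, weight w e = k := by
  simp only [mem_closure_range_iff, weight_apply, eq_comm]

theorem Ideal.mem_of_forall_mem_sup_pow {R : Type*} [CommRing R] [IsNoetherianRing R]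
    {I J : Ideal R} (hJ : J ≤ jacobson ⊥) {x : R} (hx : ∀ k : ℕ, x ∈ I ⊔ J ^ k) : x ∈ I := by
  have hbot := iInf_pow_smul_eq_bot_of_le_jacobson (M := R ⧸ I) J hJ
  rw [← Quotient.eq_zero_iff_mem, ← Submodule.mem_bot (R := R) (M := R ⧸ I), ← hbot,
    Submodule.mem_iInf]
  intro k
  obtain ⟨a, ha, b, hb, rfl⟩ := Submodule.mem_sup.mp (hx k)
  rw [map_add, Quotient.eq_zero_iff_mem.mpr ha, zero_add, ← Quotient.algebraMap_eq,
    Algebra.algebraMap_eq_smul_one]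
  exact Submodule.smul_mem_smul hb Submodule.mem_top

namespace MvPowerSeries

variable {σ R : Type*} [CommRing R]

theorem span_range_X_le_jacobson_bot :
    Ideal.span (Set.range X) ≤ (⊥ : Ideal (MvPowerSeries σ R)).jacobson := by
  intro x hx
  have hx0 : constantCoeff x = 0 :=
    (Ideal.span_le (I := RingHom.ker constantCoeff).mpr (by rintro _ ⟨i, rfl⟩; simp)) hx
  exact Ideal.mem_jacobson_bot.mpr fun y => by simp [isUnit_iff_constantCoeff, hx0]

theorem mem_pow_span_range_X_of_coeff_eq_zero [Finite σ] {d : ℕ} {F : MvPowerSeries σ R}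
    (hF : ∀ e : σ →₀ ℕ, degree e < d → coeff e F = 0) :
    F ∈ Ideal.span (Set.range X) ^ d := by
  -- `R⟦σ⟧` is the adic completion of `R[σ]`, in which the kernel of the `d`-th projection is
  -- `(X)^d • ⊤`; `F` lies in it because its truncation below degree `d` vanishes.
  set I := MvPolynomial.idealOfVars σ R
  set Φ := toAdicCompletionAlgEquiv σ R
  have htrunc : truncTotal d F = 0 := by
    ext e
    by_cases he : degree e < d
    · rw [coeff_truncTotal _ he, hF e he]; rfl
    · rw [coeff_truncTotal_eq_zero _ (not_lt.mp he)]; rfl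
  have hΦ : Φ F ∈
      I ^ d • (⊤ : Submodule (MvPolynomial σ R) (AdicCompletion I (MvPolynomial σ R))) := by
    rw [AdicCompletion.pow_smul_top_eq_ker_eval (MvPolynomial.idealOfVars_fg σ R),
      LinearMap.mem_ker, AdicCompletion.eval_apply, toAdicCompletionAlgEquiv_apply,
      toAdicCompletion_apply_eq_mk_truncTotal, htrunc]
    rfl
  have hF' : F ∈ I ^ d • (⊤ : Submodule (MvPolynomial σ R) (MvPowerSeries σ R)) := by
    have := Submodule.mem_map_of_mem (f := Φ.symm.toLinearMap) hΦ
    rwa [Submodule.map_smul'', Submodule.map_top,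
      LinearMap.range_eq_top.mpr Φ.symm.surjective, AlgEquiv.toLinearMap_apply,
      AlgEquiv.symm_apply_apply] at this
  have hX : ⇑(algebraMap (MvPolynomial σ R) (MvPowerSeries σ R)) ∘ MvPolynomial.X = X := by
    ext1 i; simp [algebraMap_apply']
  rwa [Ideal.smul_top_eq_map, Submodule.restrictScalars_mem, Ideal.map_pow, Ideal.map_span,
    ← Set.range_comp, hX] at hF'

theorem mem_of_forall_exists_coeff_sub_eq_zero [Finite σ] [IsNoetherianRing R]
    {I : Ideal (MvPowerSeries σ R)} {f : MvPowerSeries σ R}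
    (h : ∀ d : ℕ, ∃ a ∈ I, ∀ e : σ →₀ ℕ, degree e < d → coeff e (f - a) = 0) : f ∈ I :=
  Ideal.mem_of_forall_mem_sup_pow span_range_X_le_jacobson_bot fun d => by
    obtain ⟨a, ha, hfa⟩ := h d
    simpa using Submodule.add_mem_sup ha (mem_pow_span_range_X_of_coeff_eq_zero hfa)

end MvPowerSeries

theorem PowerSeries.hasSubst_X_pow {σ R : Type*} [Finite σ] [CommRing R] {m : σ → ℕ}
    (hm : ∀ i, 0 < m i) : MvPowerSeries.HasSubst (fun i => (X ^ m i : PowerSeries R)) :=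
  MvPowerSeries.hasSubst_of_constantCoeff_zero fun i => by simp [X, (hm i).ne']

theorem PowerSeries.prod_X_pow_pow {σ R : Type*} [CommSemiring R] (m : σ → ℕ) (e : σ →₀ ℕ) :
    (e.prod fun i k => (X ^ m i : PowerSeries R) ^ k) = X ^ weight m e := by
  simp [weight_apply, Finsupp.prod, ← pow_mul, Finset.prod_pow_eq_pow_sum, Finsupp.sum, mul_comm]

section MonomialCurve

variable {K : Type*} [CommRing K] {n : ℕ} {m : Fin n → ℕ}

variable (m) in
noncomputable def weightFiber (k : ℕ) : Finset (Fin n →₀ ℕ) :=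
  {e ∈ Finset.Iic (equivFunOnFinite.symm fun _ => k) | weight m e = k}

theorem mem_weightFiber (hm : ∀ i, 0 < m i) {k : ℕ} {e : Fin n →₀ ℕ} :
    e ∈ weightFiber m k ↔ weight m e = k := by
  refine ⟨fun h => (Finset.mem_filter.mp h).2, fun he => Finset.mem_filter.mpr ⟨?_, he⟩⟩
  exact Finset.mem_Iic.mpr fun i => he ▸ le_weight m (hm i).ne' e

theorem coeff_monomialCurveSubst (F : MvPowerSeries (Fin n) K) (k : ℕ) :
    PowerSeries.coeff k (monomialCurveSubst m F) =
      ∑ e ∈ weightFiber m k, MvPowerSeries.coeff e F := by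
  simp only [monomialCurveSubst, weightFiber, PowerSeries.coeff_mk, weight_eq_sum_mul]

theorem monomialCurveSubst_eq_subst (hm : ∀ i, 0 < m i) (F : MvPowerSeries (Fin n) K) :
    monomialCurveSubst m F =
      MvPowerSeries.subst (fun i => (PowerSeries.X ^ m i : PowerSeries K)) F := by
  ext k
  rw [coeff_monomialCurveSubst, PowerSeries.coeff,
    MvPowerSeries.coeff_subst (PowerSeries.hasSubst_X_pow hm)]
  simp_rw [PowerSeries.prod_X_pow_pow, PowerSeries.coeff_coeToMvPowerSeries,
    PowerSeries.coeff_X_pow, smul_ite, smul_zero, smul_eq_mul, mul_one]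
  rw [finsum_eq_finsetSum_of_support_subset (s := weightFiber m k)]
  · exact Finset.sum_congr rfl fun e he => (if_pos ((mem_weightFiber hm).mp he).symm).symm
  · intro e he
    exact (mem_weightFiber hm).mpr (by_contra fun h => he (if_neg fun h' => h h'.symm))

variable (m) in
noncomputable def monomialCurveSubstAlgHom (hm : ∀ i, 0 < m i) :
    MvPowerSeries (Fin n) K →ₐ[K] PowerSeries K :=
  MvPowerSeries.substAlgHom (PowerSeries.hasSubst_X_pow hm)

theorem monomialCurveSubstAlgHom_apply (hm : ∀ i, 0 < m i) (F : MvPowerSeries (Fin n) K) :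
    monomialCurveSubstAlgHom m hm F = monomialCurveSubst m F := by
  rw [monomialCurveSubst_eq_subst hm, monomialCurveSubstAlgHom, MvPowerSeries.substAlgHom_apply]

theorem coeff_weight_monomialCurveSubst (hm : ∀ i, 0 < m i) {e : Fin n →₀ ℕ}
    (he : ∀ e', weight m e' = weight m e → e' = e) (F : MvPowerSeries (Fin n) K) :
    PowerSeries.coeff (weight m e) (monomialCurveSubst m F) = MvPowerSeries.coeff e F := by
  rw [coeff_monomialCurveSubst]
  exact Finset.sum_eq_single_of_mem e ((mem_weightFiber hm).mpr rfl)
    fun e' he' hne => absurd (he e' ((mem_weightFiber hm).mp he')) hne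

theorem coeff_monomialCurveSubst_eq_zero {k : ℕ}
    (hk : k ∉ AddSubmonoid.closure (Set.range m)) (F : MvPowerSeries (Fin n) K) :
    PowerSeries.coeff k (monomialCurveSubst m F) = 0 := by
  rw [coeff_monomialCurveSubst]
  refine Finset.sum_eq_zero fun e he => absurd ?_ hk
  exact AddSubmonoid.mem_closure_range_iff_exists_weight_eq.mpr ⟨e, (Finset.mem_filter.mp he).2⟩

theorem exists_monomialCurveSubst_eq (hm : ∀ i, 0 < m i) {c : PowerSeries K}
    (hc : ∀ k ∉ AddSubmonoid.closure (Set.range m), PowerSeries.coeff k c = 0) :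
    ∃ F, monomialCurveSubst m F = c := by
  classical
  choose! s hs using fun k (hk : k ∈ AddSubmonoid.closure (Set.range m)) =>
    AddSubmonoid.mem_closure_range_iff_exists_weight_eq.mp hk
  let F : MvPowerSeries (Fin n) K :=
    fun e => if s (weight m e) = e then PowerSeries.coeff (weight m e) c else 0
  refine ⟨F, PowerSeries.ext fun k => ?_⟩
  have hF : ∀ e ∈ weightFiber m k, MvPowerSeries.coeff e F =
      if s k = e then PowerSeries.coeff k c else 0 := fun e he => by
    rw [← (mem_weightFiber hm).mp he]; rfl
  rw [coeff_monomialCurveSubst, Finset.sum_congr rfl hF, Finset.sum_ite_eq]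
  split_ifs with hk
  · rfl
  · exact (hc k fun hk' => hk ((mem_weightFiber hm).mpr (hs k hk'))).symm

theorem exists_coeff_sub_sum_mul_eq_zero {r d : ℕ} (hm : ∀ i, 0 < m i)
    (hsep : ∀ e e' : Fin n →₀ ℕ, degree e < d → weight m e' = weight m e → e' = e)
    {f : MvPowerSeries (Fin n) K} {g : Fin r → MvPowerSeries (Fin n) K} {c : Fin r → PowerSeries K}
    (hc : ∀ i, ∀ k ∉ AddSubmonoid.closure (Set.range m), PowerSeries.coeff k (c i) = 0)
    (hf : monomialCurveSubst m f = ∑ i, c i * monomialCurveSubst m (g i)) :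
    ∃ a : Fin r → MvPowerSeries (Fin n) K,
      ∀ e : Fin n →₀ ℕ, degree e < d → MvPowerSeries.coeff e (f - ∑ i, a i * g i) = 0 := by
  choose a ha using fun i => exists_monomialCurveSubst_eq hm (hc i)
  have hzero : monomialCurveSubstAlgHom m hm (f - ∑ i, a i * g i) = 0 := by
    simp only [map_sub, map_sum, map_mul, monomialCurveSubstAlgHom_apply, ha, hf, sub_self]
  refine ⟨a, fun e he => ?_⟩
  rw [← coeff_weight_monomialCurveSubst hm (hsep e · he), ← monomialCurveSubstAlgHom_apply hm,
    hzero, map_zero]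

variable (n) in
/-- With these weights, the weight of an exponent `e` of total degree `< b` has base-`b` digits
`e₀, …, e_{n-1}, |e|`, so `e` is recovered from it. -/
def separatingWeight (b : ℕ) : Fin n → ℕ := fun i => b ^ n + b ^ (i : ℕ)

theorem weight_separatingWeight (b : ℕ) (e : Fin n →₀ ℕ) :
    weight (separatingWeight n b) e = b ^ n * degree e + ∑ i, e i * b ^ (i : ℕ) := by
  simp only [weight_eq_sum_mul, degree_eq_sum, separatingWeight, Finset.mul_sum,
    ← Finset.sum_add_distrib]
  exact Finset.sum_congr rfl fun i _ => by ring

theorem eq_of_weight_separatingWeight_eq {b : ℕ} {e e' : Fin n →₀ ℕ} (he : degree e < b)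
    (h : weight (separatingWeight n b) e' = weight (separatingWeight n b) e) : e' = e := by
  have digits_lt {x : Fin n →₀ ℕ} (hx : degree x < b) : ∑ i, x i * b ^ (i : ℕ) < b ^ n :=
    Nat.sum_mul_pow_lt_pow fun i => (le_degree i x).trans_lt hx
  rw [weight_separatingWeight, weight_separatingWeight] at h
  have he' : degree e' < b := by
    refine Nat.lt_of_mul_lt_mul_left (a := b ^ n) ?_
    calc b ^ n * degree e' ≤ b ^ n * degree e + ∑ i, e i * b ^ (i : ℕ) := by omega
      _ < b ^ n * (degree e + 1) := by
        rw [mul_add_one]; exact Nat.add_lt_add_left (digits_lt he) _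
      _ ≤ b ^ n * b := Nat.mul_le_mul_left _ he
  have hdigits := congrArg (· % b ^ n) h
  simp only [Nat.mul_add_mod, Nat.mod_eq_of_lt (digits_lt he), Nat.mod_eq_of_lt (digits_lt he')]
    at hdigits
  exact Finsupp.ext (congrFun (Nat.eq_of_sum_mul_pow_eq
    (fun i => (le_degree i e').trans_lt he') (fun i => (le_degree i e).trans_lt he) hdigits))

end MonomialCurve

/-- Theorem 8 of the paper. For `f, g₁, …, g_r ∈ K[[x₁,…,xₙ]]`,
`f ∈ (g₁, …, g_r)` iff for every tuple of positive integers `m = (m₁,…,mₙ)`, the series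
`φ_m(f)` lies in the ideal of the subring `K[[t^{m₁},…,t^{mₙ}]] ⊆ K[[t]]` generated by
`φ_m(g₁), …, φ_m(g_r)`; the latter membership is expressed by the existence of
coefficients `cᵢ` lying in the subring (i.e. whose `t^k`-coefficients vanish for `k`
outside the additive submonoid generated by `m₁, …, mₙ`) with `φ_m(f) = ∑ᵢ cᵢ·φ_m(gᵢ)`. -/
theorem mem_ideal_iff_monomial_curves
    {K : Type*} [Field K] (n r : ℕ)
    (f : MvPowerSeries (Fin n) K) (g : Fin r → MvPowerSeries (Fin n) K) :
    f ∈ Ideal.span (Set.range g) ↔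
      ∀ m : Fin n → ℕ, (∀ i, 0 < m i) →
        ∃ c : Fin r → PowerSeries K,
          (∀ i, ∀ k ∉ AddSubmonoid.closure (Set.range m),
            PowerSeries.coeff k (c i) = 0) ∧
          monomialCurveSubst m f = ∑ i, c i * monomialCurveSubst m (g i) := by
  constructor
  · intro hf m hm
    obtain ⟨a, rfl⟩ := Ideal.mem_span_range_iff_exists_fun.mp hf
    refine ⟨fun i => monomialCurveSubst m (a i),
      fun i k hk => coeff_monomialCurveSubst_eq_zero hk (a i), ?_⟩
    simp only [← monomialCurveSubstAlgHom_apply hm, map_sum, map_mul]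
  · intro H
    refine MvPowerSeries.mem_of_forall_exists_coeff_sub_eq_zero fun d => ?_
    have hm : ∀ i, 0 < separatingWeight n (d + 1) i := fun i => by
      simp only [separatingWeight]; positivity
    obtain ⟨c, hc, hf⟩ := H _ hm
    obtain ⟨a, ha⟩ := exists_coeff_sub_sum_mul_eq_zero hm
      (fun e e' he => eq_of_weight_separatingWeight_eq (he.trans d.lt_succ_self)) hc hf
    exact ⟨∑ i, a i * g i, Ideal.mem_span_range_iff_exists_fun.mpr ⟨a, rfl⟩, ha⟩
end
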